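/- arXiv:2007.12825 — 8 statements merged into one kernel-verified Lean document; each statement's English description precedes it below -/
import Mathlib

section
/- Every closed dominating walk in the de Bruijn graph G(a,k) (with a ≥ 2, k ≥ 2) has length at least a^{k-1}. -/
/-- Arc of the de Bruijn graph `G(a,k)`: there is an arc from `x` to `y` iff
`y` is obtained from `x` by a left shift (the first `k-1` symbols of `y` are
the last `k-1` symbols of `x`). -/
def dbArc (a k : ℕ) (x y : Fin k → Fin a) : Prop :=
  ∀ (i : ℕ) (h : i + 1 < k), y ⟨i, Nat.lt_of_succ_lt h⟩ = x ⟨i + 1, h⟩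

/-- A closed directed walk of length `n` in a digraph with adjacency `Adj`,
encoded as an `n`-periodic sequence of vertices with consecutive arcs. -/
def IsClosedWalk {V : Type*} (Adj : V → V → Prop) (n : ℕ) (w : ℕ → V) : Prop :=
  0 < n ∧ (∀ i, w (i + n) = w i) ∧ ∀ i, Adj (w i) (w (i + 1))

/-- The walk `w` dominates the digraph: every vertex lies on the walk or is an
out-neighbour of a vertex on the walk. -/
def Dominates {V : Type*} (Adj : V → V → Prop) (w : ℕ → V) : Prop :=
  ∀ v, (∃ i, w i = v) ∨ ∃ i, Adj (w i) v

/-- Every closed dominating walk in `G(a,k)` (with `a ≥ 2`, `k ≥ 2`) has length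
at least `a^(k-1)`. -/
theorem deBruijn_closedDominatingWalk_length_lower_bound (a k : ℕ)
    (ha : 2 ≤ a) (hk : 2 ≤ k) (n : ℕ) (w : ℕ → Fin k → Fin a)
    (hw : IsClosedWalk (dbArc a k) n w) (hd : Dominates (dbArc a k) w) :
    a ^ (k - 1) ≤ n := by
  obtain ⟨hn, hper, harc⟩ := hw
  -- periodicity: w i = w (i % n)
  have hmul : ∀ m i, w (i + m * n) = w i := by
    intro m
    induction m with
    | zero => simp
    | succ m ih =>
      intro i
      have : i + (m + 1) * n = (i + m * n) + n := by ring
      rw [this, hper, ih]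
  have hmod : ∀ i, w (i % n) = w i := by
    intro i
    conv_rhs => rw [← Nat.mod_add_div i n]
    rw [Nat.mul_comm]; exact (hmul (i / n) (i % n)).symm
  -- the "suffix" map
  set S : Fin n → (Fin (k - 1) → Fin a) :=
    fun i j => w i ⟨(j : ℕ) + 1, by omega⟩ with hS
  have hsurj : Function.Surjective S := by
    intro p
    -- extend p to a vertex v
    have ha0 : (0 : ℕ) < a := by omega
    set v : Fin k → Fin a :=
      fun j => if h : (j : ℕ) < k - 1 then p ⟨j, h⟩ else ⟨0, ha0⟩ with hv
    -- in either case, get an index i with dbArc (w i) v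
    have key : ∃ i, dbArc a k (w i) v := by
      rcases hd v with ⟨i, hi⟩ | ⟨i, hi⟩
      · refine ⟨i + n - 1, ?_⟩
        have h1 : (i + n - 1) + 1 = i + n := by omega
        have : w ((i + n - 1) + 1) = v := by rw [h1, hper, hi]
        rw [← this]
        exact harc (i + n - 1)
      · exact ⟨i, hi⟩
    obtain ⟨i, hi⟩ := key
    refine ⟨⟨i % n, Nat.mod_lt _ hn⟩, ?_⟩
    funext j
    have hj1 : (j : ℕ) + 1 < k := by omega
    have h2 := hi (j : ℕ) hj1
    simp only [hS]
    rw [hmod i, ← h2, hv]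
    simp only [dif_pos j.isLt]
  have := Fintype.card_le_of_surjective S hsurj
  simpa using this
end

section
/- The watchman number of the de Bruijn graph G(a,k) equals a^{k-1}, for any alphabet size a ≥ 2 and any k ≥ 2. That is, the minimum length of a closed directed walk that dominates all vertices of G(a,k) is exactly a^{k-1}. -/
/-!
Lower bound: if a closed walk `w` of length `N` dominates `G(a,k)`, every vertex is an
out-neighbour of one of `w 0, …, w (N-1)`, so its first `k-1` letters are the last `k-1`
letters of one of them; all `a^(k-1)` words of length `k-1` thus occur among `N` suffixes.

Upper bound: `G(a,n+1)` is the line digraph of `G(a,n)`, the arc `e` running from `Fin.init e`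
to `Fin.tail e`. Every vertex of `G(a,n)` has in- and out-degree `a` and the digraph is strongly
connected, so it has an Euler circuit (grow a circuit by splicing in disjoint circuits, which
exist by degree counting). That circuit is a Hamiltonian cycle `u` of `G(a,n+1)`, and appending
to each `u i` the last letter of `u (i+1)` gives a closed walk of length `a^(n+1)` in `G(a,n+2)`
whose suffixes run through all of `G(a,n+1)`, hence a dominating one.
-/

theorem exists_of_bounded_growth {α : Type*} {P Q : α → Prop} (f : α → ℕ) (N : ℕ)
    (hbound : ∀ x, P x → f x ≤ N) (hgrow : ∀ x, P x → ¬Q x → ∃ y, P y ∧ f x < f y)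
    {x₀ : α} (h₀ : P x₀) : ∃ x, P x ∧ Q x := by
  induction hn : N - f x₀ using Nat.strong_induction_on generalizing x₀ with
  | _ n ih =>
    by_cases hQ : Q x₀
    · exact ⟨x₀, h₀, hQ⟩
    obtain ⟨y, hy, hlt⟩ := hgrow x₀ h₀ hQ
    exact ih (N - f y) (by have := hbound y hy; omega) hy rfl

theorem Relation.ReflTransGen.exists_rel_mem_not_mem {α : Type*} {R : α → α → Prop}
    {S : Set α} {x y : α} (h : ReflTransGen R x y) (hx : x ∈ S) (hy : y ∉ S) :
    ∃ u ∈ S, ∃ v ∉ S, R u v := by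
  induction h with
  | refl => exact absurd hx hy
  | @tail b c _ hbc ih =>
    by_cases hb : b ∈ S
    · exact ⟨b, hb, c, hy, hbc⟩
    · exact ih hb

def Composable {E V : Type*} (src tgt : E → V) (e f : E) : Prop := tgt e = src f

namespace List

variable {E : Type*} (R : E → E → Prop)

def IsCircuit (l : List E) : Prop :=
  l.Nodup ∧ l.IsChain R ∧ ∀ x ∈ l.getLast?, ∀ y ∈ l.head?, R x y

variable {R}

theorem isCircuit_nil : IsCircuit R [] := by simp [IsCircuit]

theorem IsCircuit.rotate {l₁ l₂ : List E} (h : IsCircuit R (l₁ ++ l₂)) :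
    IsCircuit R (l₂ ++ l₁) := by
  obtain ⟨hnd, hc, hcl⟩ := h
  rcases eq_or_ne l₁ [] with rfl | h₁
  · simpa using ⟨hnd, hc, hcl⟩
  rcases eq_or_ne l₂ [] with rfl | h₂
  · simp only [append_nil, nil_append] at *
    exact ⟨hnd, hc, hcl⟩
  rw [isChain_append] at hc
  refine ⟨nodup_append_comm.mp hnd, hc.2.1.append hc.1 fun x hx y hy => ?_, fun x hx y hy => ?_⟩
  · exact hcl x (by rwa [getLast?_append_of_ne_nil _ h₂]) y
      (by rwa [head?_append_of_ne_nil _ h₁])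
  · rw [getLast?_append_of_ne_nil _ h₁] at hx
    rw [head?_append_of_ne_nil _ h₂] at hy
    exact hc.2.2 x hx y hy

theorem IsCircuit.isClosedWalk {l : List E} (h : IsCircuit R l) (hne : l ≠ []) :
    IsClosedWalk R l.length
      (fun i => l[i % l.length]'(Nat.mod_lt _ (length_pos_iff.2 hne))) := by
  have hpos := length_pos_iff.2 hne
  refine ⟨hpos, fun i => by simp only [Nat.add_mod_right], fun i => ?_⟩
  have hsucc : (i + 1) % l.length = (i % l.length + 1) % l.length :=
    (Nat.mod_add_mod i _ 1).symm
  rcases Nat.lt_or_ge (i % l.length + 1) l.length with hlt | hge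
  · simp only [hsucc, Nat.mod_eq_of_lt hlt]
    exact isChain_iff_getElem.mp h.2.1 _ hlt
  · have hlast : i % l.length + 1 = l.length := by have := Nat.mod_lt i hpos; omega
    simp only [hsucc, hlast, Nat.mod_self]
    simp only [show i % l.length = l.length - 1 by omega]
    exact h.2.2 _ (by simp [getLast?_eq_getElem?]) _ (by simp [head?_eq_getElem?])

section Composable

variable {V : Type*} {src tgt : E → V}

theorem IsChain.cons_head_map_eq {l : List E} (hl : l.IsChain (Composable src tgt))
    (hne : l ≠ []) : src (l.head hne) :: l.map tgt = l.map src ++ [tgt (l.getLast hne)] := by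
  induction l with
  | nil => exact absurd rfl hne
  | cons e r ih =>
    rcases r with _ | ⟨f, r⟩
    · simp
    · rw [isChain_cons_cons] at hl
      have := ih hl.2 (cons_ne_nil f r)
      simp only [head_cons, map_cons, getLast_cons_cons, cons_append] at this ⊢
      rw [hl.1, this]

theorem IsCircuit.map_perm {l : List E} (h : IsCircuit (Composable src tgt) l) :
    l.map tgt ~ l.map src := by
  rcases eq_or_ne l [] with rfl | hne
  · rfl
  have hclosed : tgt (l.getLast hne) = src (l.head hne) :=
    h.2.2 _ (getLast?_eq_getLast_of_ne_nil hne ▸ rfl) _ (head?_eq_some_head hne ▸ rfl)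
  have hcons : src (l.head hne) :: l.map tgt ~ src (l.head hne) :: l.map src := by
    rw [h.2.1.cons_head_map_eq hne, hclosed]
    exact perm_append_singleton _ _
  exact hcons.cons_inv

/-- At `x = tgt (last m)` the open trail `m` has one more arriving than departing edge, while
`l` and the whole edge set are balanced: so some edge off `l` and `m` departs from `x`. -/
theorem exists_fresh_successor [Fintype E]
    (hbal : Finset.univ.val.map tgt = Finset.univ.val.map src) {l m : List E}
    (hl : IsCircuit (Composable src tgt) l) (hm : m.Nodup)
    (hmc : m.IsChain (Composable src tgt)) (hlm : l.Disjoint m) (hne : m ≠ [])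
    (hopen : tgt (m.getLast hne) ≠ src (m.head hne)) :
    ∃ e, e ∉ l ∧ e ∉ m ∧ src e = tgt (m.getLast hne) := by
  classical
  by_contra! hno
  have hcount := congrArg (Multiset.count (tgt (m.getLast hne))) hbal
  have hlcount := hl.map_perm.count_eq (tgt (m.getLast hne))
  have hmcount := congrArg (List.count (tgt (m.getLast hne))) (hmc.cons_head_map_eq hne)
  set x := tgt (m.getLast hne)
  set L : Multiset E := ↑(l ++ m)
  have hsplit : Finset.univ.val = L + (Finset.univ.val - L) :=
    (add_tsub_cancel_of_le <| (Multiset.le_iff_subset (Multiset.coe_nodup.2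
      (hl.1.append hm hlm))).2 fun e _ => Finset.mem_univ e).symm
  have hrest : ((Finset.univ.val - L).map src).count x = 0 := by
    simp only [Multiset.count_eq_zero, Multiset.mem_map,
      Multiset.mem_sub_of_nodup Finset.univ.nodup]
    rintro ⟨e, ⟨-, he⟩, hex⟩
    simp only [L, Multiset.mem_coe, mem_append, not_or] at he
    exact hno e he.1 he.2 hex
  rw [hsplit, Multiset.map_add, Multiset.map_add, Multiset.count_add, Multiset.count_add,
    hrest] at hcount
  simp only [L, Multiset.map_coe, Multiset.coe_count, map_append, count_append] at hcount
  simp only [count_cons, count_append, count_nil, beq_iff_eq, hopen.symm, if_true,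
    if_false] at hmcount
  omega

theorem IsCircuit.append {l₁ l₂ : List E} (h₁ : IsCircuit (Composable src tgt) l₁)
    (h₂ : IsCircuit (Composable src tgt) l₂) (hd : l₁.Disjoint l₂)
    (hj : ∀ x ∈ l₁.getLast?, ∀ y ∈ l₂.head?, Composable src tgt x y) :
    IsCircuit (Composable src tgt) (l₁ ++ l₂) := by
  refine ⟨h₁.1.append h₂.1 hd, h₁.2.1.append h₂.2.1 hj, ?_⟩
  rcases eq_or_ne l₁ [] with rfl | hne₁
  · simpa using h₂.2.2
  rcases eq_or_ne l₂ [] with rfl | hne₂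
  · simpa using h₁.2.2
  rw [getLast?_append_of_ne_nil _ hne₂, head?_append_of_ne_nil _ hne₁]
  intro x hx y hy
  have hz₁ : l₁.getLast hne₁ ∈ l₁.getLast? := by
    simp [getLast?_eq_getLast_of_ne_nil hne₁]
  have hz₂ : l₂.head hne₂ ∈ l₂.head? := by simp [head?_eq_some_head hne₂]
  calc tgt x = src _ := h₂.2.2 x hx _ hz₂
    _ = tgt _ := (hj _ hz₁ _ hz₂).symm
    _ = src y := h₁.2.2 _ hz₁ y hy

theorem exists_isCircuit_head?_eq [Fintype E]
    (hbal : Finset.univ.val.map tgt = Finset.univ.val.map src) {l : List E}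
    (hl : IsCircuit (Composable src tgt) l) {v : E} (hv : v ∉ l) :
    ∃ m, IsCircuit (Composable src tgt) m ∧ m.head? = some v ∧ l.Disjoint m := by
  have hgrow : ∀ m : List E, m.Nodup ∧ m.IsChain (Composable src tgt) ∧ m.head? = some v ∧
      l.Disjoint m → ¬(∀ x ∈ m.getLast?, ∀ y ∈ m.head?, Composable src tgt x y) →
      ∃ m' : List E, (m'.Nodup ∧ m'.IsChain (Composable src tgt) ∧ m'.head? = some v ∧
      l.Disjoint m') ∧ m.length < m'.length := by
    rintro m ⟨hnd, hc, hhead, hdisj⟩ hopen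
    have hne : m ≠ [] := by rintro rfl; simp at hhead
    have hopen' : tgt (m.getLast hne) ≠ src (m.head hne) := fun h => hopen fun x hx y hy => by
      rw [getLast?_eq_getLast_of_ne_nil hne, Option.mem_some_iff] at hx
      rw [head?_eq_some_head hne, Option.mem_some_iff] at hy
      exact hx ▸ hy ▸ h
    obtain ⟨e, hel, hem, hse⟩ := exists_fresh_successor hbal hl hnd hc hdisj hne hopen'
    refine ⟨m ++ [e], ⟨hnd.append (nodup_singleton e) (disjoint_singleton.2 hem),
      hc.append (isChain_singleton e) ?_, by rw [head?_append_of_ne_nil _ hne, hhead],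
      disjoint_append_right.2 ⟨hdisj, disjoint_singleton.2 hel⟩⟩, by simp⟩
    rw [getLast?_eq_getLast_of_ne_nil hne]
    simpa [Composable] using hse.symm
  obtain ⟨m, ⟨hnd, hc, hhead, hdisj⟩, hclosed⟩ :=
    exists_of_bounded_growth length (Fintype.card E) (fun m hm => hm.1.length_le_card) hgrow
      ⟨nodup_singleton v, isChain_singleton v, rfl, disjoint_singleton.2 hv⟩
  exact ⟨m, ⟨hnd, hc, hclosed⟩, hhead, hdisj⟩

theorem exists_isCircuit_forall_mem [Fintype E]
    (hbal : Finset.univ.val.map tgt = Finset.univ.val.map src)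
    (hconn : ∀ e f, Relation.ReflTransGen (Composable src tgt) e f) :
    ∃ l, IsCircuit (Composable src tgt) l ∧ ∀ e, e ∈ l := by
  refine exists_of_bounded_growth length (Fintype.card E) (fun l hl => hl.1.length_le_card)
    (fun l hl hmiss => ?_) isCircuit_nil
  push Not at hmiss
  obtain ⟨e, he⟩ := hmiss
  rcases eq_or_ne l [] with rfl | hne
  · obtain ⟨m, hm, hhead, -⟩ := exists_isCircuit_head?_eq hbal hl he
    exact ⟨m, hm, by cases m <;> simp_all⟩
  obtain ⟨u, hu, v, hv, huv⟩ :=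
    (hconn (l.head hne) e).exists_rel_mem_not_mem (S := {x | x ∈ l}) (head_mem hne) he
  obtain ⟨m, hm, hhead, hdisj⟩ := exists_isCircuit_head?_eq hbal hl hv
  obtain ⟨p, q, rfl⟩ := append_of_mem hu
  have hrot : IsCircuit (Composable src tgt) (q ++ (p ++ [u])) :=
    IsCircuit.rotate (by simpa using hl)
  refine ⟨q ++ (p ++ [u]) ++ m, hrot.append hm ?_ ?_, ?_⟩
  · intro x hx hxm
    exact hdisj (by simp only [mem_append, mem_cons] at hx ⊢; tauto) hxm
  · simpa [hhead] using huv
  · have : m ≠ [] := by rintro rfl; simp at hhead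
    simp only [length_append, length_cons, length_nil]
    have := length_pos_iff.2 this
    omega

end Composable

end List

open List

theorem dbArc_succ_eq (a n : ℕ) : dbArc a (n + 1) = Composable Fin.init Fin.tail := by
  ext x y
  exact ⟨fun h => funext fun i => (h i (by omega)).symm,
    fun h i hi => (congrFun h ⟨i, by omega⟩).symm⟩

theorem map_tail_univ_eq_map_init (α : Type*) [Fintype α] (n : ℕ) :
    (Finset.univ : Finset (Fin (n + 1) → α)).val.map Fin.tail =
      Finset.univ.val.map (Fin.init : (Fin (n + 1) → α) → Fin n → α) := by
  let rotate := (finRotate (n + 1)).symm.arrowCongr (Equiv.refl α)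
  have hrotate : ∀ e, Fin.init (rotate e) = Fin.tail e := fun e => by
    funext i
    simp [rotate, Equiv.arrowCongr_apply, Fin.init, Fin.tail]
  calc _ = (Finset.univ.val.map rotate).map Fin.init := by
        rw [Multiset.map_map]; exact Multiset.map_congr rfl fun e _ => (hrotate e).symm
    _ = _ := by rw [Multiset.map_univ_val_equiv]

theorem reflTransGen_composable_init_tail {α : Type*} {n : ℕ} (x y : Fin (n + 1) → α) :
    Relation.ReflTransGen (Composable Fin.init Fin.tail) x y := by
  have hshift : ∀ (w : ℕ → α) d, Relation.ReflTransGen (Composable Fin.init Fin.tail)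
      (fun j : Fin (n + 1) => w j) (fun j => w (d + j)) := by
    intro w d
    induction d with
    | zero => simp only [zero_add]; rfl
    | succ d ih =>
      refine ih.tail (funext fun j => ?_)
      simp only [Fin.tail, Fin.init, Fin.val_succ, Fin.val_castSucc]
      congr 1; omega
  let w : ℕ → α := fun j => if h : j < n + 1 then x ⟨j, h⟩ else y (Fin.ofNat (n + 1) j)
  convert hshift w (n + 1) using 1
  · funext j; simp only [w, dif_pos j.isLt]
  · funext j
    simp only [w, dif_neg (by omega : ¬(n + 1 + j : ℕ) < n + 1)]
    congr 1; ext; simp [Nat.add_mod_left, Nat.mod_eq_of_lt j.isLt]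

theorem exists_isClosedWalk_dbArc_surjective {a : ℕ} (ha : 0 < a) (n : ℕ) :
    ∃ u, IsClosedWalk (dbArc a (n + 1)) (a ^ (n + 1)) u ∧ Function.Surjective u := by
  classical
  obtain ⟨l, hl, hall⟩ := exists_isCircuit_forall_mem (map_tail_univ_eq_map_init (Fin a) n)
    reflTransGen_composable_init_tail
  have hne : l ≠ [] := ne_nil_of_mem (hall fun _ => ⟨0, ha⟩)
  have hlen : l.length = a ^ (n + 1) := by
    rw [← toFinset_card_of_nodup hl.1, Finset.eq_univ_of_forall fun e => mem_toFinset.2 (hall e)]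
    simp
  rw [dbArc_succ_eq, ← hlen]
  refine ⟨_, hl.isClosedWalk hne, fun e => ?_⟩
  obtain ⟨i, hi, rfl⟩ := getElem_of_mem (hall e)
  exact ⟨i, by simp only [Nat.mod_eq_of_lt hi]⟩

theorem tail_snoc_eq {α : Type*} {n : ℕ} {x y : Fin (n + 1) → α}
    (h : Fin.tail x = Fin.init y) :
    Fin.tail (Fin.snoc x (y (Fin.last n)) : Fin (n + 1 + 1) → α) = y := by
  funext j
  refine Fin.lastCases ?_ (fun j => ?_) j
  · simp [Fin.tail]
  · have := congrFun h j
    simp only [Fin.tail, Fin.init] at this ⊢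
    rw [Fin.succ_castSucc, Fin.snoc_castSucc, this]

theorem exists_isClosedWalk_dbArc_dominates {a : ℕ} (ha : 0 < a) (n : ℕ) :
    ∃ w, IsClosedWalk (dbArc a (n + 1 + 1)) (a ^ (n + 1)) w ∧
      Dominates (dbArc a (n + 1 + 1)) w := by
  obtain ⟨u, ⟨hpos, hper, harc⟩, hsurj⟩ := exists_isClosedWalk_dbArc_surjective ha n
  rw [dbArc_succ_eq] at harc ⊢
  have htail : ∀ i, Fin.tail (Fin.snoc (u i) (u (i + 1) (Fin.last n)) :
      Fin (n + 1 + 1) → Fin a) = u (i + 1) := fun i => tail_snoc_eq (harc i)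
  refine ⟨fun i => Fin.snoc (u i) (u (i + 1) (Fin.last n)), ⟨hpos, fun i => ?_, fun i => ?_⟩,
    fun v => Or.inr ?_⟩
  · simp only [hper, add_right_comm i]
  · simp only [Composable, htail, Fin.init_snoc]
  · obtain ⟨j, hj⟩ := hsurj (Fin.init v)
    refine ⟨j + a ^ (n + 1) - 1, ?_⟩
    rw [Composable, htail, Nat.sub_add_cancel (by omega : 1 ≤ j + a ^ (n + 1)), hper, hj]

theorem IsClosedWalk.exists_lt_adj_of_dominates {V : Type*} {Adj : V → V → Prop} {n : ℕ}
    {w : ℕ → V} (hw : IsClosedWalk Adj n w) (hd : Dominates Adj w) (v : V) :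
    ∃ i < n, Adj (w i) v := by
  obtain ⟨hpos, hper, harc⟩ := hw
  obtain ⟨i, hi⟩ : ∃ i, Adj (w i) v := by
    rcases hd v with ⟨j, rfl⟩ | h
    · refine ⟨j + n - 1, ?_⟩
      simpa only [Nat.sub_add_cancel (by omega : 1 ≤ j + n), hper] using harc (j + n - 1)
    · exact h
  exact ⟨i % n, Nat.mod_lt _ hpos, by rwa [Function.Periodic.map_mod_nat hper]⟩

theorem pow_le_of_isClosedWalk_dbArc_dominates {a n N : ℕ} (ha : 0 < a)
    {w : ℕ → Fin (n + 1 + 1) → Fin a} (hw : IsClosedWalk (dbArc a (n + 1 + 1)) N w)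
    (hd : Dominates (dbArc a (n + 1 + 1)) w) : a ^ (n + 1) ≤ N := by
  have hsurj : Set.SurjOn (fun i => Fin.tail (w i)) (Finset.range N)
      (Finset.univ : Finset (Fin (n + 1) → Fin a)) := by
    intro y _
    obtain ⟨i, hi, hadj⟩ := hw.exists_lt_adj_of_dominates hd (Fin.snoc y ⟨0, ha⟩)
    rw [dbArc_succ_eq] at hadj
    exact ⟨i, Finset.mem_range.2 hi, hadj.trans (Fin.init_snoc _ _)⟩
  simpa using Finset.card_le_card_of_surjOn _ hsurj

/-- The watchman number of `G(a,k)` equals `a^(k-1)`: the minimum length of a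
closed dominating walk is exactly `a^(k-1)`. -/
theorem deBruijn_watchmanNumber (a k : ℕ) (ha : 2 ≤ a) (hk : 2 ≤ k) :
    IsLeast {n : ℕ | ∃ w : ℕ → Fin k → Fin a,
      IsClosedWalk (dbArc a k) n w ∧ Dominates (dbArc a k) w} (a ^ (k - 1)) := by
  obtain ⟨n, rfl⟩ : ∃ n, k = n + 1 + 1 := ⟨k - 2, by omega⟩
  rw [Nat.add_sub_cancel]
  refine ⟨exists_isClosedWalk_dbArc_dominates (by omega) n, ?_⟩
  rintro N ⟨w, hw, hd⟩
  exact pow_le_of_isClosedWalk_dbArc_dominates (by omega) hw hd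
end

section
/- For every a ≥ 2 and k ≥ 1, the de Bruijn graph G(a,k) contains a directed Hamilton cycle. -/
/-!
A Hamilton cycle of `G(a, m + 1)` is a permutation `σ` of the strings of length `m + 1`
that is a single cycle and sends every string `x` to an out-neighbour, i.e. `Fin.init (σ x)`
equals `Fin.tail x`. Rotating every string by one place is such a permutation, but it has
many cycles. Two strings with the same tail have the same out-neighbours, so composing a
valid `σ` with the transposition of two such strings keeps it valid, and merges their cycles
when they were different. Take a valid `σ` whose cycle through a base point is as large as
possible: with any string that cycle contains every string of the same tail, hence (pulling
back along `σ`) every out-neighbour, and since `G(a, m + 1)` is strongly connected it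
contains every string. This is Euler's theorem for `G(a, m)` in the language of its line
digraph `G(a, m + 1)`.
-/

open Equiv Equiv.Perm Relation

section LineDigraph

variable {X V : Type*}

theorem Equiv.Perm.sameCycle_mul_swap [Finite X] [DecidableEq X] {σ : Perm X} {x y z : X}
    (hxy : ¬σ.SameCycle x y) (hxz : σ.SameCycle x z) : (σ * swap x y).SameCycle y z := by
  have hτy : (σ * swap x y) y = σ x := by simp
  have hiter : ∀ j : ℕ, (σ * swap x y).SameCycle y ((σ ^ (j + 1)) x) := by
    intro j
    induction j with
    | zero => rw [zero_add, pow_one, ← hτy]; exact sameCycle_apply_right.2 .rfl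
    | succ j ih =>
      rw [pow_succ', Perm.mul_apply]
      by_cases hux : (σ ^ (j + 1)) x = x
      · rw [hux, ← hτy]; exact sameCycle_apply_right.2 .rfl
      · have huy : (σ ^ (j + 1)) x ≠ y := fun h => hxy (h ▸ sameCycle_pow_right.2 .rfl)
        have hswap : (σ * swap x y) ((σ ^ (j + 1)) x) = σ ((σ ^ (j + 1)) x) := by
          simp [swap_apply_of_ne_of_ne hux huy]
        rw [← hswap]; exact sameCycle_apply_right.2 ih
  obtain ⟨i, hi, -, rfl⟩ := hxz.exists_pow_eq''
  obtain ⟨j, rfl⟩ := Nat.exists_eq_succ_of_ne_zero hi.ne'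
  exact hiter j

theorem Equiv.Perm.setOf_sameCycle_ssubset_mul_swap [Finite X] [DecidableEq X] {σ : Perm X}
    {x₀ x y : X} (hx : σ.SameCycle x₀ x) (hy : ¬σ.SameCycle x₀ y) :
    {z | σ.SameCycle x₀ z} ⊂ {z | (σ * swap x y).SameCycle x₀ z} := by
  have hxy : ¬σ.SameCycle x y := fun h => hy (hx.trans h)
  have hyx₀ : (σ * swap x y).SameCycle y x₀ := sameCycle_mul_swap hxy hx.symm
  refine (Set.ssubset_iff_of_subset fun z hz => ?_).2 ⟨y, hyx₀.symm, hy⟩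
  exact hyx₀.symm.trans (sameCycle_mul_swap hxy (hx.symm.trans hz))

variable (src tgt : X → V)

theorem tgt_eq_src_mul_swap [DecidableEq X] {σ : Perm X} (hσ : ∀ z, tgt z = src (σ z))
    {x y : X} (hxy : tgt x = tgt y) (z : X) : tgt z = src ((σ * swap x y) z) := by
  rcases eq_or_ne z x with rfl | hzx
  · simp [hxy, hσ]
  rcases eq_or_ne z y with rfl | hzy
  · simp [← hxy, hσ]
  simp [swap_apply_of_ne_of_ne hzx hzy, hσ]

theorem exists_isCycleOn_univ_of_reachable [Finite X] (x₀ : X)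
    (hσ₀ : ∃ σ : Perm X, ∀ x, tgt x = src (σ x))
    (hreach : ∀ z, ReflTransGen (fun x y => tgt x = src y) x₀ z) :
    ∃ σ : Perm X, (∀ x, tgt x = src (σ x)) ∧ σ.IsCycleOn Set.univ := by
  classical
  obtain ⟨σ, hσ, hmax⟩ := Set.exists_max_image {σ : Perm X | ∀ x, tgt x = src (σ x)}
    (fun σ => {z | σ.SameCycle x₀ z}.ncard) (Set.toFinite _) hσ₀
  have hclosed : ∀ x y, σ.SameCycle x₀ x → tgt x = tgt y → σ.SameCycle x₀ y := by
    intro x y hx hxy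
    by_contra hy
    exact (hmax _ (tgt_eq_src_mul_swap src tgt hσ hxy)).not_gt
      (Set.ncard_lt_ncard (setOf_sameCycle_ssubset_mul_swap hx hy))
  have hall : ∀ z, σ.SameCycle x₀ z := by
    intro z
    induction hreach z with
    | refl => exact .rfl
    | @tail y y' _ hyy' ih =>
      -- `σ⁻¹ y'` and `y` both have `tgt` equal to `src y'`
      have h := hclosed y (σ⁻¹ y') ih (by rw [hyy', hσ]; simp)
      simpa using sameCycle_apply_right.2 h
  exact ⟨σ, hσ, σ.bijective.bijOn_univ, fun x _ y _ => (hall x).symm.trans (hall y)⟩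

end LineDigraph

theorem exists_closedWalk_of_isCycleOn_univ {X : Type*} [Fintype X] [Nonempty X]
    {Adj : X → X → Prop} {σ : Perm X} (hadj : ∀ x, Adj x (σ x))
    (hσ : σ.IsCycleOn Set.univ) :
    ∃ w : ℕ → X, IsClosedWalk Adj (Fintype.card X) w ∧
      ∀ v, ∃! i : ℕ, i < Fintype.card X ∧ w i = v := by
  obtain ⟨x₀⟩ := ‹Nonempty X›
  have hσ' : σ.IsCycleOn (Finset.univ : Finset X) := by rwa [Finset.coe_univ]
  have hx₀ := Finset.mem_univ x₀
  refine ⟨fun i => (σ ^ i) x₀, ⟨Fintype.card_pos, fun i => ?_, fun i => ?_⟩, fun v => ?_⟩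
  · exact (hσ'.pow_apply_eq_pow_apply hx₀).2 Nat.add_modEq_right
  · change Adj ((σ ^ i) x₀) ((σ ^ (i + 1)) x₀)
    rw [pow_succ', Perm.mul_apply]
    exact hadj _
  · obtain ⟨i, hi, rfl⟩ := hσ'.exists_pow_eq hx₀ (Finset.mem_univ v)
    exact ⟨i, ⟨hi, rfl⟩, fun j ⟨hj, hji⟩ =>
      ((hσ'.pow_apply_eq_pow_apply hx₀).1 hji).eq_of_lt_of_lt hj hi⟩

section DeBruijn

variable {α : Type*} {m : ℕ}

theorem dbArc_iff {a : ℕ} {x y : Fin (m + 1) → Fin a} :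
    dbArc a (m + 1) x y ↔ Fin.tail x = Fin.init y := by
  refine ⟨fun h => funext fun i => (h i (by omega)).symm, fun h i hi => ?_⟩
  exact (congrFun h ⟨i, by omega⟩).symm

theorem exists_perm_tail_eq_init :
    ∃ σ : Perm (Fin (m + 1) → α), ∀ x, Fin.tail x = Fin.init (σ x) :=
  ⟨(finRotate (m + 1)).symm.arrowCongr (Equiv.refl α), fun x => by
    funext i
    simp [Fin.tail, Fin.init]⟩

theorem reflTransGen_tail_eq_init (x z : Fin (m + 1) → α) :
    ReflTransGen (fun x y => Fin.tail x = Fin.init y) x z := by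
  -- walk along the windows of length `m + 1` of the concatenation of `x` and `z`
  let s : ℕ → α := fun n =>
    if h : n < m + 1 then x ⟨n, h⟩ else z (Fin.ofNat (m + 1) (n - (m + 1)))
  let window : ℕ → Fin (m + 1) → α := fun j i => s (i + j)
  have hwalk : ∀ j, ReflTransGen (fun x y => Fin.tail x = Fin.init y) x (window j) := by
    intro j
    induction j with
    | zero =>
      convert ReflTransGen.refl
      funext i
      simp only [window, s, add_zero, dif_pos i.isLt]
    | succ j ih =>
      refine ih.tail (funext fun i => ?_)
      simp only [Fin.tail, Fin.val_succ, Fin.init, Fin.val_castSucc, window]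
      rw [add_assoc, add_comm 1 j]
  convert hwalk (m + 1)
  funext i
  simp only [window, s, dif_neg (show ¬(i : ℕ) + (m + 1) < m + 1 by omega)]
  simp

end DeBruijn

/-- For every `a ≥ 2` and `k ≥ 1`, the de Bruijn graph `G(a,k)` has a directed
Hamilton cycle: a closed walk of length `a^k` visiting every vertex exactly once
(within one period). -/
theorem deBruijn_hamiltonCycle (a k : ℕ) (ha : 2 ≤ a) (hk : 1 ≤ k) :
    ∃ w : ℕ → Fin k → Fin a, IsClosedWalk (dbArc a k) (a ^ k) w ∧
      ∀ v : Fin k → Fin a, ∃! i : ℕ, i < a ^ k ∧ w i = v := by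
  obtain ⟨m, rfl⟩ : ∃ m, k = m + 1 := ⟨k - 1, by omega⟩
  have : Nonempty (Fin (m + 1) → Fin a) := ⟨fun _ => ⟨0, by omega⟩⟩
  obtain ⟨σ, hσ, hcyc⟩ := exists_isCycleOn_univ_of_reachable
    (Fin.init : (Fin (m + 1) → Fin a) → Fin m → Fin a) Fin.tail (Classical.arbitrary _)
    exists_perm_tail_eq_init (reflTransGen_tail_eq_init _)
  rw [show a ^ (m + 1) = Fintype.card (Fin (m + 1) → Fin a) by simp]
  exact exists_closedWalk_of_isCycleOn_univ (fun x => dbArc_iff.2 (hσ x)) hcyc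
end

section
/- Let D be a cyclic generating sequence over an alphabet A of size at least 2 that contains k consecutive occurrences of the same symbol together with at least one preceding symbol, i.e., there exist positions with a_{i+1} = a_{i+2} = ... = a_{i+k}. Then in the de Bruijn subdigraph generated by D, letting v_1 = a_i a_{i+1} ... a_{i+k-1} and v_2 = a_{i+1} ... a_{i+k}, there is an arc from v_1 to v_2 and the closed out-neighbourhood of v_2 is contained in the out-neighbourhood of v_1. -/
/-- The cyclic `k`-substring of the (periodic) sequence `D` starting at position `i`. -/
def cycSub (a k : ℕ) (D : ℕ → Fin a) (i : ℕ) : Fin k → Fin a :=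
  fun j => D (i + j.val)

/-- The vertex set of the de Bruijn subdigraph generated by a cyclic sequence `D`
of length `n`: all cyclic `k`-substrings of `D` together with all `k`-strings
obtainable from one of them by a left shift. -/
def genVerts (a k n : ℕ) (D : ℕ → Fin a) : Set (Fin k → Fin a) :=
  {v | (∃ i < n, v = cycSub a k D i) ∨ ∃ i < n, dbArc a k (cycSub a k D i) v}

/-- If a cyclic generating sequence `D` contains `k` consecutive occurrences of
the same symbol at positions `i+1, …, i+k`, then for `v₁ = a_i…a_(i+k-1)` and
`v₂ = a_(i+1)…a_(i+k)` there is an arc from `v₁` to `v₂` and the closed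
out-neighbourhood of `v₂` in the subdigraph generated by `D` is contained in the
out-neighbourhood of `v₁`. -/
theorem deBruijnSubdigraph_redundant_vertex (a k n : ℕ) (ha : 2 ≤ a)
    (hk : 1 ≤ k) (hkn : k ≤ n) (D : ℕ → Fin a) (hper : ∀ i, D (i + n) = D i)
    (i : ℕ) (hconst : ∀ j, 1 ≤ j → j ≤ k → D (i + j) = D (i + 1)) :
    dbArc a k (cycSub a k D i) (cycSub a k D (i + 1)) ∧
      insert (cycSub a k D (i + 1))
          {y ∈ genVerts a k n D | dbArc a k (cycSub a k D (i + 1)) y} ⊆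
        {y ∈ genVerts a k n D | dbArc a k (cycSub a k D i) y} := by

  have hn : 0 < n := lt_of_lt_of_le hk hkn
  -- D is n-periodic: D m = D (m % n)
  have hmod : ∀ m, D m = D (m % n) := by
    intro m
    induction m using Nat.strong_induction_on with
    | _ m ih =>
      by_cases hm : m < n
      · rw [Nat.mod_eq_of_lt hm]
      · push_neg at hm
        obtain ⟨m', rfl⟩ : ∃ m', m = m' + n := ⟨m - n, by omega⟩
        rw [hper, ih m' (by omega), Nat.add_mod_right]
  have harc : dbArc a k (cycSub a k D i) (cycSub a k D (i + 1)) := by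
    intro j h
    simp only [cycSub]
    congr 1
    omega
  refine ⟨harc, ?_⟩
  have hmem : cycSub a k D (i + 1) ∈ genVerts a k n D := by
    left
    refine ⟨(i + 1) % n, Nat.mod_lt _ hn, ?_⟩
    funext j
    simp only [cycSub]
    rw [hmod (i + 1 + j.val), hmod ((i + 1) % n + j.val), Nat.mod_add_mod]
  intro y hy
  rcases hy with rfl | ⟨hyV, hyArc⟩
  · exact ⟨hmem, harc⟩
  · refine ⟨hyV, ?_⟩
    intro j h
    have h1 := hyArc j h
    simp only [cycSub] at h1 ⊢
    rw [h1]
    rw [show i + 1 + (j + 1) = i + (j + 2) by omega, show i + (j + 1) = i + (j + 1) by rfl]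
    rw [hconst (j + 2) (by omega) (by omega), hconst (j + 1) (by omega) (by omega)]
end

section
/- Let D be a cyclic sequence of length n ≥ k over an alphabet of size a ≥ 2 such that all cyclic (k-1)-substrings of D are pairwise distinct. Then the de Bruijn subdigraph G_D(a,k) generated by D has exactly a·n vertices. -/
lemma Dshift {a : ℕ} (n : ℕ) (D : ℕ → Fin a) (hper : ∀ i, D (i + n) = D i)
    (m t : ℕ) (hm : m ≤ n) : D (m % n + t) = D (m + t) := by
  rcases lt_or_eq_of_le hm with h | h
  · rw [Nat.mod_eq_of_lt h]
  · subst h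
    rw [Nat.mod_self, Nat.zero_add, Nat.add_comm, hper]

/-- If all cyclic `(k-1)`-substrings of a cyclic sequence `D` of length `n ≥ k`
are pairwise distinct, then the de Bruijn subdigraph generated by `D` has
exactly `a * n` vertices. -/
theorem deBruijnSubdigraph_card (a k n : ℕ) (ha : 2 ≤ a)
    (hk : 1 ≤ k) (hkn : k ≤ n) (D : ℕ → Fin a) (hper : ∀ i, D (i + n) = D i)
    (hdist : ∀ i < n, ∀ j < n,
      (∀ t, t < k - 1 → D (i + t) = D (j + t)) → i = j) :
    (genVerts a k n D).ncard = a * n := by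
  have hn : 1 ≤ n := hk.trans hkn
  have hk1 : k - 1 < k := Nat.sub_lt hk Nat.one_pos
  set f : Fin n × Fin a → (Fin k → Fin a) := fun p j =>
    if j.val = k - 1 then p.2 else D (p.1.val + 1 + j.val) with hf
  -- f (i,c) is the target of an arc from cycSub i
  have hfarc : ∀ (i : Fin n) (c : Fin a), dbArc a k (cycSub a k D i.val) (f (i, c)) := by
    intro i c t ht
    have htne : t ≠ k - 1 := by omega
    simp only [hf, cycSub, htne, if_false]
    congr 1; omega
  have hrange : genVerts a k n D = Set.range f := by
    ext v
    constructor
    · rintro (⟨i, hi, rfl⟩ | ⟨i, hi, harc⟩)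
      · by_cases h0 : i = 0
        · subst h0
          refine ⟨(⟨n - 1, by omega⟩, D (k - 1)), ?_⟩
          funext j
          simp only [hf]
          by_cases hj : j.val = k - 1
          · rw [if_pos hj]
            simp only [cycSub]
            congr 1; omega
          · rw [if_neg hj]
            have e : n - 1 + 1 + j.val = j.val + n := by omega
            rw [e, hper]
            simp only [cycSub]
            congr 1; omega
        · refine ⟨(⟨i - 1, by omega⟩, D (i + (k - 1))), ?_⟩
          funext j
          simp only [hf]
          by_cases hj : j.val = k - 1
          · rw [if_pos hj]
            simp only [cycSub]
            congr 1; omega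
          · rw [if_neg hj]
            simp only [cycSub]
            congr 1; omega
      · refine ⟨(⟨i, hi⟩, v ⟨k - 1, hk1⟩), ?_⟩
        funext j
        simp only [hf]
        by_cases hj : j.val = k - 1
        · rw [if_pos hj]
          congr 1
          exact (Fin.ext hj).symm
        · rw [if_neg hj]
          have hj1 : j.val + 1 < k := by omega
          have := harc j.val hj1
          simp only [cycSub] at this
          have hjj : (⟨j.val, Nat.lt_of_succ_lt hj1⟩ : Fin k) = j := rfl
          rw [hjj] at this
          rw [this]
          congr 1; omega
    · rintro ⟨⟨i, c⟩, rfl⟩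
      exact Or.inr ⟨i.val, i.isLt, hfarc i c⟩
  have hinj : Function.Injective f := by
    rintro ⟨⟨i, hi⟩, c⟩ ⟨⟨j, hj⟩, d⟩ h
    have hc : c = d := by
      have := congrFun h ⟨k - 1, hk1⟩
      simpa [hf] using this
    have key : ∀ t, t < k - 1 → D ((i + 1) % n + t) = D ((j + 1) % n + t) := by
      intro t ht
      have := congrFun h ⟨t, by omega⟩
      have htne : t ≠ k - 1 := by omega
      simp only [hf, htne, if_false] at this
      rw [Dshift n D hper _ t (by omega), Dshift n D hper _ t (by omega)]
      exact this
    have hmod := hdist ((i + 1) % n) (Nat.mod_lt _ hn) ((j + 1) % n) (Nat.mod_lt _ hn) key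
    have hij : i = j := by
      rcases Nat.lt_or_ge (i + 1) n with h1 | h1
      · rcases Nat.lt_or_ge (j + 1) n with h2 | h2
        · rw [Nat.mod_eq_of_lt h1, Nat.mod_eq_of_lt h2] at hmod; omega
        · have : j + 1 = n := by omega
          rw [Nat.mod_eq_of_lt h1, this, Nat.mod_self] at hmod; omega
      · have e1 : i + 1 = n := by omega
        rcases Nat.lt_or_ge (j + 1) n with h2 | h2
        · rw [e1, Nat.mod_self, Nat.mod_eq_of_lt h2] at hmod; omega
        · omega
    simp [hij, hc]
  rw [hrange, ← Nat.card_coe_set_eq, Nat.card_range_of_injective hinj,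
    Nat.card_eq_fintype_card, Fintype.card_prod, Fintype.card_fin, Fintype.card_fin,
    Nat.mul_comm]
end

section
/- Let D be a cyclic sequence of length n ≥ k over an alphabet of size a ≥ 2 such that all cyclic (k-1)-substrings of D are pairwise distinct. Then the walk induced by the cyclic k-tour of D is a minimum closed dominating walk (watchman's walk) of the de Bruijn subdigraph G_D(a,k), and the watchman number of G_D(a,k) equals n. -/
/-- The walk `w` dominates the set `S` of vertices: every vertex of `S` lies on
the walk or is an out-neighbour of a vertex on the walk. -/
def DominatesOn {V : Type*} (Adj : V → V → Prop) (S : Set V) (w : ℕ → V) : Prop :=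
  ∀ v ∈ S, (∃ i, w i = v) ∨ ∃ i, Adj (w i) v

private lemma periodic_mod' {α : Type*} (f : ℕ → α) (n : ℕ)
    (h : ∀ i, f (i + n) = f i) (i : ℕ) : f i = f (i % n) := by
  conv_lhs => rw [← Nat.mod_add_div i n]
  generalize i / n = q
  induction q with
  | zero => simp
  | succ q ih =>
    rw [Nat.mul_succ, ← Nat.add_assoc, h, ih]

/-- If all cyclic `(k-1)`-substrings of a cyclic sequence `D` of length `n ≥ k`
are pairwise distinct, then the `k`-tour of `D` is a minimum closed dominating
walk of the generated subdigraph, whose watchman number is therefore `n`. -/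
theorem deBruijnSubdigraph_watchman (a k n : ℕ) (ha : 2 ≤ a)
    (hk : 1 ≤ k) (hkn : k ≤ n) (D : ℕ → Fin a) (hper : ∀ i, D (i + n) = D i)
    (hdist : ∀ i < n, ∀ j < n,
      (∀ t, t < k - 1 → D (i + t) = D (j + t)) → i = j) :
    IsClosedWalk
        (fun x y => x ∈ genVerts a k n D ∧ y ∈ genVerts a k n D ∧ dbArc a k x y)
        n (fun i => cycSub a k D i) ∧
    DominatesOn
        (fun x y => x ∈ genVerts a k n D ∧ y ∈ genVerts a k n D ∧ dbArc a k x y)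
        (genVerts a k n D) (fun i => cycSub a k D i) ∧
    IsLeast {m : ℕ | ∃ w : ℕ → Fin k → Fin a,
      IsClosedWalk
        (fun x y => x ∈ genVerts a k n D ∧ y ∈ genVerts a k n D ∧ dbArc a k x y)
        m w ∧
      DominatesOn
        (fun x y => x ∈ genVerts a k n D ∧ y ∈ genVerts a k n D ∧ dbArc a k x y)
        (genVerts a k n D) w} n := by
  have hn : 0 < n := hk.trans hkn
  have hcyc : ∀ i, cycSub a k D (i + n) = cycSub a k D i := by
    intro i; funext j
    show D (i + n + j.val) = D (i + j.val)
    rw [show i + n + j.val = i + j.val + n by ring, hper]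
  have harc : ∀ i, dbArc a k (cycSub a k D i) (cycSub a k D (i + 1)) := by
    intro i t h
    show D (i + 1 + t) = D (i + (t + 1))
    exact congrArg D (by ring)
  have hmem : ∀ i, cycSub a k D i ∈ genVerts a k n D := by
    intro i
    exact Or.inl ⟨i % n, Nat.mod_lt _ hn, (periodic_mod' (cycSub a k D) n hcyc i).symm ▸ rfl⟩
  have hwalk : IsClosedWalk
      (fun x y => x ∈ genVerts a k n D ∧ y ∈ genVerts a k n D ∧ dbArc a k x y)
      n (fun i => cycSub a k D i) :=
    ⟨hn, hcyc, fun i => ⟨hmem i, hmem (i + 1), harc i⟩⟩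
  have hdomm : DominatesOn
      (fun x y => x ∈ genVerts a k n D ∧ y ∈ genVerts a k n D ∧ dbArc a k x y)
      (genVerts a k n D) (fun i => cycSub a k D i) := by
    intro v hv
    rcases hv with ⟨i, hi, hv⟩ | ⟨i, hi, hv⟩
    · exact Or.inl ⟨i, hv.symm⟩
    · exact Or.inr ⟨i, hmem i, Or.inr ⟨i, hi, hv⟩, hv⟩
  refine ⟨hwalk, hdomm, ⟨⟨_, hwalk, hdomm⟩, ?_⟩⟩
  rintro m ⟨w, ⟨hm0, hwper, hwadj⟩, hdom⟩
  -- key: every substring shares its (k-1)-prefix with some walk vertex w i, i < m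
  have key : ∀ j < n, ∃ i < m, ∀ t (ht : t < k - 1),
      w i ⟨t, ht.trans_le (Nat.sub_le k 1)⟩ = D (j + t) := by
    intro j hj
    have : ∃ i, ∀ t (ht : t < k - 1),
        w i ⟨t, ht.trans_le (Nat.sub_le k 1)⟩ = D (j + t) := by
      rcases hdom (cycSub a k D j) (hmem j) with ⟨i, hi⟩ | ⟨i, _, _, hi⟩
      · exact ⟨i, fun t ht => by rw [hi]; rfl⟩
      · refine ⟨i + 1, fun t ht => ?_⟩
        have h1 : t + 1 < k := by omega
        have e1 := (hwadj i).2.2 t h1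
        have e2 := hi t h1
        exact e1.trans e2.symm
    obtain ⟨i, hi⟩ := this
    refine ⟨i % m, Nat.mod_lt _ hm0, fun t ht => ?_⟩
    rw [← periodic_mod' w m hwper i]
    exact hi t ht
  choose g hg1 hg2 using fun j : Fin n => key j.val j.2
  have hinj : Function.Injective (fun j : Fin n => (⟨g j, hg1 j⟩ : Fin m)) := by
    intro j1 j2 h
    have hgg : g j1 = g j2 := congrArg Fin.val h
    apply Fin.ext
    refine hdist j1.val j1.2 j2.val j2.2 (fun t ht => ?_)
    have := hg2 j1 t ht
    rw [hgg] at this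
    rw [← this, hg2 j2 t ht]
  have := Fintype.card_le_of_injective _ hinj
  simpa using this
end

section
/- If D is the concatenation S·S of a sequence S of length at least k with itself, then the de Bruijn subdigraph generated by D equals the de Bruijn subdigraph generated by the cyclic sequence S, and the closed walk induced by the k-tour of S dominates G_D; hence the k-tour of D (of length 2|S|) is not a minimum closed dominating walk. -/
lemma per_aux {a m : ℕ} (S : ℕ → Fin a) (hS : ∀ i, S (i + m) = S i) :
    ∀ q r, S (r + q * m) = S r := by
  intro q
  induction q with
  | zero => intro r; simp
  | succ q ih =>
      intro r
      have : r + (q + 1) * m = (r + q * m) + m := by ring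
      rw [this, hS, ih]

lemma per_mod {a m : ℕ} (S : ℕ → Fin a) (hS : ∀ i, S (i + m) = S i) (i : ℕ) :
    S (i % m) = S i := by
  conv_rhs => rw [← Nat.mod_add_div' i m]
  exact (per_aux S hS (i / m) (i % m)).symm

/-- If `D = S·S` is the concatenation of a sequence `S` of length `m ≥ k` with
itself (so `D` is the cyclic sequence of length `2m` with `D i = S (i % m)`),
then the subdigraph generated by `D` equals the subdigraph generated by the
cyclic sequence `S`, the `k`-tour of `S` is a closed walk dominating it, and
hence the `k`-tour of `D`, of length `2m`, is not a minimum closed dominating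
walk. -/
theorem deBruijnSubdigraph_doubled_not_minimum (a k m : ℕ) (ha : 2 ≤ a)
    (hk : 1 ≤ k) (hkm : k ≤ m) (S D : ℕ → Fin a)
    (hS : ∀ i, S (i + m) = S i) (hD : ∀ i, D (i + 2 * m) = D i)
    (hDS : ∀ i, D i = S (i % m)) :
    genVerts a k (2 * m) D = genVerts a k m S ∧
    (IsClosedWalk
        (fun x y => x ∈ genVerts a k (2 * m) D ∧ y ∈ genVerts a k (2 * m) D ∧
          dbArc a k x y) m (fun i => cycSub a k S i) ∧
      DominatesOn
        (fun x y => x ∈ genVerts a k (2 * m) D ∧ y ∈ genVerts a k (2 * m) D ∧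
          dbArc a k x y) (genVerts a k (2 * m) D) (fun i => cycSub a k S i)) ∧
    ¬ IsLeast {l : ℕ | ∃ w : ℕ → Fin k → Fin a,
        IsClosedWalk
          (fun x y => x ∈ genVerts a k (2 * m) D ∧ y ∈ genVerts a k (2 * m) D ∧
            dbArc a k x y) l w ∧
        DominatesOn
          (fun x y => x ∈ genVerts a k (2 * m) D ∧ y ∈ genVerts a k (2 * m) D ∧
            dbArc a k x y) (genVerts a k (2 * m) D) w} (2 * m) := by
  have hm : 0 < m := lt_of_lt_of_le hk hkm
  have hDSfun : ∀ i, D i = S i := fun i => (hDS i).trans (per_mod S hS i)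
  have hcyc : ∀ i, cycSub a k D i = cycSub a k S i := by
    intro i; funext j; exact hDSfun _
  have hcycmod : ∀ i, cycSub a k S i = cycSub a k S (i % m) := by
    intro i; funext j
    show S (i + j.val) = S (i % m + j.val)
    conv_lhs => rw [← Nat.mod_add_div' i m]
    have : i % m + i / m * m + j.val = (i % m + j.val) + (i / m) * m := by ring
    rw [this, per_aux S hS]
  have hEq : genVerts a k (2 * m) D = genVerts a k m S := by
    ext v
    constructor
    · rintro (⟨i, hi, rfl⟩ | ⟨i, hi, harc⟩)
      · left
        exact ⟨i % m, Nat.mod_lt _ hm, by rw [hcyc, hcycmod]⟩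
      · right
        refine ⟨i % m, Nat.mod_lt _ hm, ?_⟩
        rwa [hcyc, hcycmod] at harc
    · have hle : m ≤ 2 * m := by omega
      rintro (⟨i, hi, rfl⟩ | ⟨i, hi, harc⟩)
      · exact Or.inl ⟨i, lt_of_lt_of_le hi hle, (hcyc i).symm⟩
      · exact Or.inr ⟨i, lt_of_lt_of_le hi hle, by rwa [hcyc]⟩
  have hmem : ∀ i, cycSub a k S i ∈ genVerts a k (2 * m) D := by
    intro i
    rw [hEq]
    exact Or.inl ⟨i % m, Nat.mod_lt _ hm, hcycmod i⟩
  have hperW : ∀ i, cycSub a k S (i + m) = cycSub a k S i := by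
    intro i; funext j
    show S (i + m + j.val) = S (i + j.val)
    have : i + m + j.val = (i + j.val) + m := by ring
    rw [this, hS]
  have harc : ∀ i, dbArc a k (cycSub a k S i) (cycSub a k S (i + 1)) := by
    intro i j hj
    show S (i + 1 + j) = S (i + (j + 1))
    congr 1; ring
  have hwalk : IsClosedWalk
      (fun x y => x ∈ genVerts a k (2 * m) D ∧ y ∈ genVerts a k (2 * m) D ∧
        dbArc a k x y) m (fun i => cycSub a k S i) :=
    ⟨hm, hperW, fun i => ⟨hmem i, hmem (i + 1), harc i⟩⟩
  have hdom : DominatesOn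
      (fun x y => x ∈ genVerts a k (2 * m) D ∧ y ∈ genVerts a k (2 * m) D ∧
        dbArc a k x y) (genVerts a k (2 * m) D) (fun i => cycSub a k S i) := by
    intro v hv
    rcases (hEq ▸ hv : v ∈ genVerts a k m S) with ⟨i, hi, rfl⟩ | ⟨i, hi, ha'⟩
    · exact Or.inl ⟨i, rfl⟩
    · exact Or.inr ⟨i, hmem i, hv, ha'⟩
  refine ⟨hEq, ⟨hwalk, hdom⟩, ?_⟩
  rintro ⟨-, hlb⟩
  have : 2 * m ≤ m := hlb ⟨fun i => cycSub a k S i, hwalk, hdom⟩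
  omega
end

section
/- For any a ≥ 2 and k ≥ 2, the de Bruijn graph G(a,k) contains a dominating directed cycle of length a^{k-1} (i.e., a directed cycle on a^{k-1} vertices whose closed out-neighbourhood is the whole vertex set). -/
open Equiv
set_option linter.unusedSectionVars false

section Aux
variable {V : Type*} [Fintype V] [DecidableEq V]

lemma iter_eq_of_avoid (f g : Equiv.Perm V) (x p : V)
    (hfg : ∀ w, w ≠ x → w ≠ p → g w = f w) (q : V) :
    ∀ n, (∀ i < n, (f ^ i) q ≠ x ∧ (f ^ i) q ≠ p) → (g ^ n) q = (f ^ n) q := by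
  intro n
  induction n with
  | zero => simp
  | succ n ih =>
    intro h
    rw [pow_succ', pow_succ', Equiv.Perm.mul_apply, Equiv.Perm.mul_apply,
      ih (fun i hi => h i (by omega))]
    exact hfg _ (h n (by omega)).1 (h n (by omega)).2

lemma exists_min_period (f : Equiv.Perm V) (q : V) :
    ∃ n, 0 < n ∧ (f ^ n) q = q ∧ ∀ i, 0 < i → i < n → (f ^ i) q ≠ q := by
  classical
  have hex : ∃ n, 0 < n ∧ (f ^ n) q = q :=
    ⟨orderOf f, orderOf_pos f, by rw [pow_orderOf_eq_one]; rfl⟩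
  exact ⟨Nat.find hex, (Nat.find_spec hex).1, (Nat.find_spec hex).2,
    fun i hi hin hiq => Nat.find_min hex hin ⟨hi, hiq⟩⟩

lemma pow_mod_apply (f : Equiv.Perm V) (q : V) {n : ℕ} (h : (f ^ n) q = q) (i : ℕ) :
    (f ^ i) q = (f ^ (i % n)) q := by
  have hmul : ∀ c, (f ^ (n * c)) q = q := by
    intro c
    induction c with
    | zero => simp
    | succ c ih => rw [Nat.mul_succ, pow_add, Equiv.Perm.mul_apply, h, ih]
  conv_lhs => rw [← Nat.mod_add_div i n]
  rw [pow_add, Equiv.Perm.mul_apply, hmul]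

lemma sameCycle_of_pow (f : Equiv.Perm V) {q w : V} {i : ℕ} (h : (f ^ i) q = w) :
    f.SameCycle q w := ⟨(i : ℤ), by rw [zpow_natCast, h]⟩

/-- Merging two cycles of `f` with a swap: if `x` and `p` are in different cycles of `f`,
then in `f * swap x p` every element of either cycle is in the cycle of `x`. -/
lemma sameCycle_mul_swap (f : Equiv.Perm V) (x p : V) (hxp : ¬ f.SameCycle x p) :
    ∀ w, (f.SameCycle x w ∨ f.SameCycle p w) → (f * Equiv.swap x p).SameCycle x w := by
  set g := f * Equiv.swap x p with hg
  have hxnep : x ≠ p := fun h => hxp (h ▸ Equiv.Perm.SameCycle.refl f x)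
  have hgx : g x = f p := by rw [hg, Equiv.Perm.mul_apply, Equiv.swap_apply_left]
  have hgp : g p = f x := by rw [hg, Equiv.Perm.mul_apply, Equiv.swap_apply_right]
  have hg_other : ∀ w, w ≠ x → w ≠ p → g w = f w := by
    intro w h1 h2
    rw [hg, Equiv.Perm.mul_apply, Equiv.swap_apply_of_ne_of_ne h1 h2]
  obtain ⟨n₀, hn₀pos, hn₀eq, hn₀min⟩ := exists_min_period f p
  obtain ⟨m₀, hm₀pos, hm₀eq, hm₀min⟩ := exists_min_period f x
  -- the f-cycle of p avoids x
  have havoid_x : ∀ i : ℕ, (f ^ i) p ≠ x := by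
    intro i h
    exact hxp (sameCycle_of_pow f h).symm
  have havoid_p : ∀ i : ℕ, (f ^ i) x ≠ p := by
    intro i h
    exact hxp (sameCycle_of_pow f h)
  have claim1 : ∀ i, 0 < i → i ≤ n₀ → (g ^ i) x = (f ^ i) p := by
    intro i hi hin
    have h1 : (g ^ i) x = (g ^ (i - 1)) (g x) := by
      conv_lhs => rw [show i = (i - 1) + 1 by omega]
      rw [pow_succ, Equiv.Perm.mul_apply]
    rw [h1, hgx, iter_eq_of_avoid f g x p hg_other (f p) (i - 1) ?_]
    · rw [← Equiv.Perm.mul_apply, ← pow_succ, show i - 1 + 1 = i by omega]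
    · intro j hj
      have hfp1 : (f ^ j) (f p) = (f ^ (j + 1)) p := by
        rw [← Equiv.Perm.mul_apply, ← pow_succ]
      rw [hfp1]
      exact ⟨havoid_x _, hn₀min _ (by omega) (by omega)⟩
  have hgn₀ : (g ^ n₀) x = p := by rw [claim1 n₀ hn₀pos le_rfl, hn₀eq]
  have claim2 : ∀ i, 0 < i → i ≤ m₀ → (g ^ (n₀ + i)) x = (f ^ i) x := by
    intro i hi him
    have h1 : (g ^ (n₀ + i)) x = (g ^ i) p := by
      rw [add_comm, pow_add, Equiv.Perm.mul_apply, hgn₀]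
    have h2 : (g ^ i) p = (g ^ (i - 1)) (g p) := by
      conv_lhs => rw [show i = (i - 1) + 1 by omega]
      rw [pow_succ, Equiv.Perm.mul_apply]
    rw [h1, h2, hgp, iter_eq_of_avoid f g x p hg_other (f x) (i - 1) ?_]
    · rw [← Equiv.Perm.mul_apply, ← pow_succ, show i - 1 + 1 = i by omega]
    · intro j hj
      have hfx1 : (f ^ j) (f x) = (f ^ (j + 1)) x := by
        rw [← Equiv.Perm.mul_apply, ← pow_succ]
      rw [hfx1]
      exact ⟨hm₀min _ (by omega) (by omega), havoid_p _⟩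
  have covp : ∀ i : ℕ, g.SameCycle x ((f ^ i) p) := by
    intro i
    rw [pow_mod_apply f p hn₀eq i]
    rcases Nat.eq_zero_or_pos (i % n₀) with h0 | h0
    · rw [h0, pow_zero]
      exact sameCycle_of_pow g hgn₀
    · exact sameCycle_of_pow g (claim1 (i % n₀) h0 (le_of_lt (Nat.mod_lt _ hn₀pos)))
  have covx : ∀ i : ℕ, g.SameCycle x ((f ^ i) x) := by
    intro i
    rw [pow_mod_apply f x hm₀eq i]
    rcases Nat.eq_zero_or_pos (i % m₀) with h0 | h0
    · simpa [h0] using Equiv.Perm.SameCycle.refl g x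
    · exact sameCycle_of_pow g (claim2 (i % m₀) h0 (le_of_lt (Nat.mod_lt _ hm₀pos)))
  rintro w (hw | hw)
  · obtain ⟨i, _, hiw⟩ := hw.exists_pow_eq'
    exact hiw ▸ covx i
  · obtain ⟨i, _, hiw⟩ := hw.exists_pow_eq'
    exact hiw ▸ covp i


lemma exists_cyclic_perm (A : V → V → Prop)
    (rect : ∀ x u v p : V, A x u → A x v → A p u → A p v)
    (conn : ∀ x y, Relation.ReflTransGen A x y) (z : V) (f0 : Equiv.Perm V)
    (hf0 : ∀ x, A x (f0 x)) :
    ∃ g : Equiv.Perm V, (∀ x, A x (g x)) ∧ ∀ y, g.SameCycle z y := by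
  suffices h : ∀ (n : ℕ) (f : Equiv.Perm V), (∀ x, A x (f x)) →
      {y | ¬ f.SameCycle z y}.ncard ≤ n →
      ∃ g : Equiv.Perm V, (∀ x, A x (g x)) ∧ ∀ y, g.SameCycle z y from
    h {y | ¬ f0.SameCycle z y}.ncard f0 hf0 le_rfl
  have bound : ∀ (f : Equiv.Perm V) (y : V), Relation.ReflTransGen A z y →
      ¬ f.SameCycle z y → ∃ x u, f.SameCycle z x ∧ ¬ f.SameCycle z u ∧ A x u := by
    intro f y hy
    induction hy with
    | refl => intro h; exact absurd (Equiv.Perm.SameCycle.refl f z) h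
    | @tail b c hzb hbc ih =>
      intro hc
      by_cases hb : f.SameCycle z b
      · exact ⟨b, c, hb, hc, hbc⟩
      · exact ih hb
  intro n
  induction n with
  | zero =>
    intro f hf hcard
    refine ⟨f, hf, fun y => ?_⟩
    by_contra hy
    have : {y | ¬ f.SameCycle z y} = ∅ :=
      (Set.ncard_eq_zero (Set.toFinite _)).1 (Nat.le_zero.1 hcard)
    exact absurd (this ▸ hy : y ∈ (∅ : Set V)) (Set.notMem_empty y)
  | succ n ih =>
    intro f hf hcard
    by_cases hall : ∀ y, f.SameCycle z y
    · exact ⟨f, hf, hall⟩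
    push_neg at hall
    obtain ⟨y, hy⟩ := hall
    obtain ⟨x, u, hzx, hzu, hxu⟩ := bound f y (conn z y) hy
    set p := f.symm u with hpdef
    have hfp : f p = u := f.apply_symm_apply u
    have hxp : ¬ f.SameCycle x p := by
      intro h
      exact hzu (hfp ▸ (hzx.trans h).apply_right)
    set g := f * Equiv.swap x p with hgdef
    have hmerge := sameCycle_mul_swap f x p hxp
    have hgshift : ∀ v, A v (g v) := by
      intro v
      by_cases hvx : v = x
      · have hgv : g v = u := by
          rw [hvx, hgdef, Equiv.Perm.mul_apply, Equiv.swap_apply_left, hfp]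
        rw [hgv, hvx]
        exact hxu
      by_cases hvp : v = p
      · have hgv : g v = f x := by
          rw [hvp, hgdef, Equiv.Perm.mul_apply, Equiv.swap_apply_right]
        rw [hgv, hvp]
        exact rect x u (f x) p hxu (hf x) (hfp ▸ hf p)
      · have hgv : g v = f v := by
          rw [hgdef, Equiv.Perm.mul_apply, Equiv.swap_apply_of_ne_of_ne hvx hvp]
        rw [hgv]
        exact hf v
    have hgzx : g.SameCycle x z := hmerge z (Or.inl hzx.symm)
    have htrans : ∀ v, f.SameCycle z v → g.SameCycle z v := by
      intro v hv
      exact hgzx.symm.trans (hmerge v (Or.inl (hzx.symm.trans hv)))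
    have hgu : g.SameCycle z u := by
      refine hgzx.symm.trans (hmerge u (Or.inr ?_))
      exact hfp ▸ (Equiv.Perm.SameCycle.refl f p).apply_right
    have hss : {y | ¬ g.SameCycle z y} ⊂ {y | ¬ f.SameCycle z y} := by
      constructor
      · intro v hv
        exact fun hfv => hv (htrans v hfv)
      · intro hsub
        exact (hsub hzu) hgu
    have hlt : {y | ¬ g.SameCycle z y}.ncard < {y | ¬ f.SameCycle z y}.ncard :=
      Set.ncard_lt_ncard hss (Set.toFinite _)
    exact ih g hgshift (by omega)

end Aux

lemma dbRect (a m : ℕ) (x u v p : Fin m → Fin a)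
    (hxu : dbArc a m x u) (hxv : dbArc a m x v) (hpu : dbArc a m p u) :
    dbArc a m p v := by
  intro i h
  rw [hxv i h, ← hxu i h, hpu i h]

lemma dbReach (a m : ℕ) (ha : 0 < a) :
    ∀ (t : ℕ) (x y : Fin m → Fin a),
      (∀ (j : ℕ) (hjt : j + t < m), y ⟨j, by omega⟩ = x ⟨j + t, hjt⟩) →
      Relation.ReflTransGen (dbArc a m) x y := by
  intro t
  induction t with
  | zero =>
    intro x y h
    have : y = x := by
      funext j
      have := h j.1 (by omega)
      simpa using this
    rw [this]
  | succ t ih =>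
    intro x y h
    set c : Fin a := if hm : t < m then y ⟨m - 1 - t, by omega⟩ else ⟨0, ha⟩ with hc
    set x' : Fin m → Fin a :=
      fun j => if hj : (j : ℕ) + 1 < m then x ⟨(j : ℕ) + 1, hj⟩ else c with hx'
    have step : dbArc a m x x' := by
      intro i hi
      show (if hj : i + 1 < m then x ⟨i + 1, hj⟩ else c) = x ⟨i + 1, hi⟩
      rw [dif_pos hi]
    refine Relation.ReflTransGen.head step (ih x' y ?_)
    intro j hjt
    show y ⟨j, by omega⟩ = (if hj : j + t + 1 < m then x ⟨j + t + 1, hj⟩ else c)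
    by_cases hj1 : j + t + 1 < m
    · rw [dif_pos hj1]
      exact h j (by omega : j + (t + 1) < m)
    · rw [dif_neg hj1, hc, dif_pos (show t < m by omega)]
      have hjval : j = m - 1 - t := by omega
      subst hjval
      rfl

/-- For `a ≥ 2`, `k ≥ 2`, the de Bruijn graph `G(a,k)` contains a dominating
directed cycle of length `a^(k-1)`: a closed walk of length `a^(k-1)`, visiting
pairwise distinct vertices, that dominates all vertices. -/
theorem deBruijn_dominating_cycle (a k : ℕ) (ha : 2 ≤ a) (hk : 2 ≤ k) :
    ∃ w : ℕ → Fin k → Fin a,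
      IsClosedWalk (dbArc a k) (a ^ (k - 1)) w ∧
      (∀ i < a ^ (k - 1), ∀ j < a ^ (k - 1), w i = w j → i = j) ∧
      Dominates (dbArc a k) w := by
  obtain ⟨n, rfl⟩ : ∃ n, k = n + 2 := ⟨k - 2, by omega⟩
  have hm : (0 : ℕ) < a := by omega
  -- base rotation permutation on Fin (n+1) → Fin a
  set rot : Equiv.Perm (Fin (n + 1) → Fin a) :=
    { toFun := fun x j => x (j + 1)
      invFun := fun x j => x (j - 1)
      left_inv := fun x => by funext j; simp
      right_inv := fun x => by funext j; simp } with hrotdef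
  have hrot : ∀ x, dbArc a (n + 1) x (rot x) := by
    intro x i h
    show x (⟨i, by omega⟩ + 1) = x ⟨i + 1, h⟩
    congr 1
    apply Fin.ext
    simp only [Fin.add_def, Fin.val_mk, Fin.val_one']
    rw [Nat.mod_eq_of_lt (by omega : 1 < n + 1), Nat.mod_eq_of_lt (by omega)]
  set z : Fin (n + 1) → Fin a := fun _ => ⟨0, hm⟩ with hz
  obtain ⟨f, hfshift, hfcyc⟩ := exists_cyclic_perm (dbArc a (n + 1))
    (dbRect a (n + 1)) (fun x y => dbReach a (n + 1) hm (n + 1) x y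
      (fun j hjt => absurd hjt (by omega))) z rot hrot
  obtain ⟨P, hPpos, hPeq, hPmin⟩ := exists_min_period f z
  have hper : ∀ i, (f ^ (i + P)) z = (f ^ i) z := by
    intro i
    rw [pow_add, Equiv.Perm.mul_apply, hPeq]
  have hsurj : ∀ y, ∃ i : ℕ, (f ^ i) z = y := by
    intro y
    obtain ⟨i, _, h⟩ := (hfcyc y).exists_pow_eq'
    exact ⟨i, h⟩
  have hinj2 : ∀ i j, i < j → j < P → (f ^ i) z ≠ (f ^ j) z := by
    intro i j hij hj heq
    have h1 : (f ^ j) z = (f ^ (j - i)) ((f ^ i) z) := by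
      rw [← Equiv.Perm.mul_apply, ← pow_add, show j - i + i = j by omega]
    have h2 : (f ^ i) ((f ^ (j - i)) z) = (f ^ i) z := by
      rw [← Equiv.Perm.mul_apply, ← pow_add, show i + (j - i) = j by omega, ← heq]
    have h3 : (f ^ (j - i)) z = z := (f ^ i).injective h2
    exact hPmin (j - i) (by omega) (by omega) h3
  have hinj : ∀ i < P, ∀ j < P, (f ^ i) z = (f ^ j) z → i = j := by
    intro i hi j hj heq
    rcases lt_trichotomy i j with h | h | h
    · exact absurd heq (hinj2 i j h hj)
    · exact h
    · exact absurd heq.symm (hinj2 j i h hi)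
  have hPN : P = a ^ (n + 1) := by
    have hbij : Function.Bijective (fun i : Fin P => (f ^ (i : ℕ)) z) := by
      constructor
      · intro i j hij
        exact Fin.ext (hinj i i.2 j j.2 hij)
      · intro y
        obtain ⟨i, hi⟩ := hsurj y
        refine ⟨⟨i % P, Nat.mod_lt _ hPpos⟩, ?_⟩
        show (f ^ (i % P)) z = y
        rw [← pow_mod_apply f z hPeq i, hi]
    have := Fintype.card_of_bijective hbij
    simpa [Fintype.card_fun] using this
  have hNP : a ^ (n + 2 - 1) = P := by
    simp only [show n + 2 - 1 = n + 1 from rfl, hPN]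
  have hstep : ∀ i, dbArc a (n + 1) ((f ^ i) z) ((f ^ (i + 1)) z) := by
    intro i
    rw [pow_succ', Equiv.Perm.mul_apply]
    exact hfshift _
  -- the dominating cycle in G(a, n+2)
  refine ⟨fun i j => if h : (j : ℕ) + 1 < n + 2 then (f ^ i) z ⟨j, by omega⟩
    else (f ^ (i + 1)) z ⟨n, by omega⟩, ⟨?_, ?_, ?_⟩, ?_, ?_⟩
  · show 0 < a ^ (n + 2 - 1)
    positivity
  · -- periodicity
    intro i
    funext j
    show (if h : (j : ℕ) + 1 < n + 2 then (f ^ (i + a ^ (n + 2 - 1))) z ⟨j, by omega⟩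
      else (f ^ (i + a ^ (n + 2 - 1) + 1)) z ⟨n, by omega⟩) = _
    have e1 : (f ^ (i + a ^ (n + 2 - 1))) z = (f ^ i) z := by
      rw [show a ^ (n + 2 - 1) = P from hNP]; exact hper i
    have e2 : (f ^ (i + a ^ (n + 2 - 1) + 1)) z = (f ^ (i + 1)) z := by
      rw [show i + a ^ (n + 2 - 1) + 1 = (i + 1) + P by rw [hNP]; ring]
      exact hper (i + 1)
    rw [e1, e2]
  · -- arcs
    intro i jn h
    show (if hh : (jn : ℕ) + 1 < n + 2 then (f ^ (i + 1)) z ⟨jn, by omega⟩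
      else (f ^ (i + 2)) z ⟨n, by omega⟩) =
      (if hh : (jn + 1 : ℕ) + 1 < n + 2 then (f ^ i) z ⟨jn + 1, by omega⟩
      else (f ^ (i + 1)) z ⟨n, by omega⟩)
    rw [dif_pos h]
    by_cases hh : jn + 2 < n + 2
    · rw [dif_pos (by omega : jn + 1 + 1 < n + 2)]
      exact hstep i jn (by omega)
    · rw [dif_neg (by omega : ¬ (jn + 1 + 1 < n + 2))]
      have hjn : jn = n := by omega
      subst hjn
      rfl
  · -- injectivity
    intro i hi j hj hij
    have heq : (f ^ i) z = (f ^ j) z := by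
      funext jj
      have := congrFun hij ⟨jj.1, by omega⟩
      simp only [dif_pos (show (jj.1 : ℕ) + 1 < n + 2 by omega)] at this
      exact this
    exact hinj i (by rw [hNP] at hi; exact hi) j (by rw [hNP] at hj; exact hj) heq
  · -- domination
    intro v
    right
    obtain ⟨i, hi⟩ := hsurj (fun jj : Fin (n + 1) => v ⟨jj.1, by omega⟩)
    refine ⟨i + P - 1, ?_⟩
    have hi' : (f ^ (i + P - 1 + 1)) z = fun jj : Fin (n + 1) => v ⟨jj.1, by omega⟩ := by
      rw [show i + P - 1 + 1 = i + P by omega, hper i, hi]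
    intro jn h
    show v ⟨jn, by omega⟩ =
      (if hh : (jn + 1 : ℕ) + 1 < n + 2 then (f ^ (i + P - 1)) z ⟨jn + 1, by omega⟩
      else (f ^ (i + P - 1 + 1)) z ⟨n, by omega⟩)
    by_cases hh : jn + 1 + 1 < n + 2
    · rw [dif_pos hh, ← hstep (i + P - 1) jn (by omega), hi']
    · rw [dif_neg hh, hi']
      have : jn = n := by omega
      subst this
      rfl
end
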